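/- Let G be a group with finite generating set S, and let S̄ = S^(2) consist of all words of length at most 2 in S ∪ S⁻¹. Let X and X̄ be the Cayley graphs of a finite quotient of G with respect to S and S̄. Then h(X) ≤ h(X̄) ≤ (4|S| − 1)·h(X). -/

import Mathlib

open Finset
open scoped Pointwise

def cayley (G : Type*) [Group G] (S : Set G) : SimpleGraph G where
  Adj x y := x ≠ y ∧ (x⁻¹ * y ∈ S ∨ y⁻¹ * x ∈ S)
  symm := ⟨fun _ _ h => ⟨h.1.symm, h.2.symm⟩⟩
  loopless := ⟨fun _ h => h.1 rfl⟩

open Classical in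
noncomputable def edgeBd {V : Type*} [Fintype V] (G : SimpleGraph V) (A : Finset V) :
    Finset (Sym2 V) :=
  G.edgeFinset.filter fun e => ∃ a ∈ A, ∃ b ∉ A, e = s(a, b)

open Classical in
noncomputable def cheeger {V : Type*} [Fintype V] (G : SimpleGraph V) : ℝ :=
  sInf { r : ℝ | ∃ A : Finset V, A.Nonempty ∧ A ≠ Finset.univ ∧
    r = (edgeBd G A).card / min (A.card : ℝ) ((Fintype.card V : ℝ) - A.card) }

/-! ### Auxiliary definitions and lemmas -/

def chSet {V : Type*} [Fintype V] (G : SimpleGraph V) : Set ℝ :=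
  { r : ℝ | ∃ A : Finset V, A.Nonempty ∧ A ≠ Finset.univ ∧
    r = (edgeBd G A).card / min (A.card : ℝ) ((Fintype.card V : ℝ) - A.card) }

lemma cheeger_eq {V : Type*} [Fintype V] (G : SimpleGraph V) : cheeger G = sInf (chSet G) := rfl

open Classical in
noncomputable def Dset {V : Type*} [Fintype V] (G : SimpleGraph V) (A : Finset V) :
    Finset (V × V) :=
  Finset.univ.filter fun p => G.Adj p.1 p.2 ∧ p.1 ∈ A ∧ p.2 ∉ A

lemma mem_Dset {V : Type*} [Fintype V] {G : SimpleGraph V} {A : Finset V} {p : V × V} :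
    p ∈ Dset G A ↔ G.Adj p.1 p.2 ∧ p.1 ∈ A ∧ p.2 ∉ A := by
  classical
  simp [Dset]

lemma mem_edgeBd {V : Type*} [Fintype V] {G : SimpleGraph V} {A : Finset V} {e : Sym2 V} :
    e ∈ edgeBd G A ↔ e ∈ G.edgeSet ∧ ∃ a ∈ A, ∃ b ∉ A, e = s(a, b) := by
  classical
  simp [edgeBd, SimpleGraph.mem_edgeFinset]

lemma edgeBd_card_eq {V : Type*} [Fintype V] (G : SimpleGraph V) (A : Finset V) :
    (edgeBd G A).card = (Dset G A).card := by
  classical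
  refine (Finset.card_bij (fun p _ => s(p.1, p.2)) ?_ ?_ ?_).symm
  · intro p hp
    rw [mem_Dset] at hp
    exact mem_edgeBd.2 ⟨hp.1, p.1, hp.2.1, p.2, hp.2.2, rfl⟩
  · intro p hp q hq h
    rw [mem_Dset] at hp hq
    rw [Sym2.mk_eq_mk_iff] at h
    rcases h with h | h
    · exact h
    · exfalso
      have h1 : p.1 = q.2 := (Prod.ext_iff.1 h).1
      exact hq.2.2 (h1 ▸ hp.2.1)
  · intro e he
    rw [mem_edgeBd] at he
    obtain ⟨hes, a, ha, b, hb, rfl⟩ := he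
    exact ⟨(a, b), mem_Dset.2 ⟨hes, ha, hb⟩, rfl⟩

lemma key_count {Q : Type*} [Group Q] [Fintype Q] (S : Finset Q) (hS : S.Nonempty)
    (Sbar : Set Q)
    (hSbar : Sbar = ((S : Set Q) ∪ (S : Set Q)⁻¹) ∪
      ((S : Set Q) ∪ (S : Set Q)⁻¹) * ((S : Set Q) ∪ (S : Set Q)⁻¹))
    (A : Finset Q) :
    (Dset (cayley Q Sbar) A).card ≤ (4 * S.card - 1) * (Dset (cayley Q (S : Set Q)) A).card := by
  classical
  set T : Finset Q := S ∪ S.image (·⁻¹) with hTdef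
  have hmemT : ∀ {x : Q}, x ∈ T ↔ (x ∈ S ∨ x⁻¹ ∈ S) := by
    intro x
    simp only [hTdef, Finset.mem_union, Finset.mem_image]
    constructor
    · rintro (h | ⟨a, ha, rfl⟩)
      · exact Or.inl h
      · exact Or.inr (by simpa using ha)
    · rintro (h | h)
      · exact Or.inl h
      · exact Or.inr ⟨x⁻¹, h, inv_inv x⟩
  have hTinv : ∀ {x : Q}, x ∈ T → x⁻¹ ∈ T := by
    intro x hx
    rcases hmemT.1 hx with h | h
    · exact hmemT.2 (Or.inr (by simpa using h))
    · exact hmemT.2 (Or.inl h)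
  have hTcard : T.card ≤ 2 * S.card := by
    refine le_trans (Finset.card_union_le _ _) ?_
    have := Finset.card_image_le (s := S) (f := (·⁻¹))
    omega
  have hTS : (T : Set Q) = (S : Set Q) ∪ (S : Set Q)⁻¹ := by
    ext x
    simp only [Finset.mem_coe, hmemT, Set.mem_union, Set.mem_inv, Finset.mem_coe]
  have hSbar' : Sbar = (T : Set Q) ∪ (T : Set Q) * (T : Set Q) := by rw [hSbar, hTS]
  have hmemSbar : ∀ {g : Q}, g ∈ Sbar ↔ g ∈ T ∨ ∃ s ∈ T, ∃ t ∈ T, s * t = g := by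
    intro g
    rw [hSbar']
    simp [Set.mem_mul]
  have hSbarInv : ∀ {g : Q}, g ∈ Sbar → g⁻¹ ∈ Sbar := by
    intro g hg
    rcases hmemSbar.1 hg with h | ⟨s, hs, t, ht, rfl⟩
    · exact hmemSbar.2 (Or.inl (hTinv h))
    · exact hmemSbar.2 (Or.inr ⟨t⁻¹, hTinv ht, s⁻¹, hTinv hs, (mul_inv_rev s t).symm⟩)
  have hadjY : ∀ {x y : Q}, (cayley Q Sbar).Adj x y → x ≠ y ∧ x⁻¹ * y ∈ Sbar := by
    intro x y h
    change x ≠ y ∧ (x⁻¹ * y ∈ Sbar ∨ y⁻¹ * x ∈ Sbar) at h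
    refine ⟨h.1, ?_⟩
    rcases h.2 with h2 | h2
    · exact h2
    · simpa using hSbarInv h2
  -- the map from boundary pairs of the big graph to boundary pairs of the small graph
  let f : Q × Q → Q × Q := fun p =>
    if p.1⁻¹ * p.2 ∈ T then p
    else if h : ∃ s ∈ T, ∃ t ∈ T, s * t = p.1⁻¹ * p.2 then
      (if p.1 * h.choose ∈ A then (p.1 * h.choose, p.2) else (p.1, p.1 * h.choose))
    else p
  have hmaps : ∀ p ∈ Dset (cayley Q Sbar) A, f p ∈ Dset (cayley Q (S : Set Q)) A := by
    rintro ⟨x, y⟩ hp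
    rw [mem_Dset] at hp
    obtain ⟨hadj, hxA, hyA⟩ := hp
    obtain ⟨hne, hg⟩ := hadjY hadj
    by_cases h1 : x⁻¹ * y ∈ T
    · have hfp : f (x, y) = (x, y) := if_pos h1
      rw [hfp, mem_Dset]
      refine ⟨show _ ∧ _ from ⟨hne, ?_⟩, hxA, hyA⟩
      rcases hmemT.1 h1 with h | h
      · exact Or.inl h
      · exact Or.inr (by simpa using h)
    · have h2 : ∃ s ∈ T, ∃ t ∈ T, s * t = x⁻¹ * y := by
        rcases hmemSbar.1 hg with h | h
        · exact absurd h h1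
        · exact h
      obtain ⟨hsT, t, htT, hst⟩ := h2.choose_spec
      set s := h2.choose with hsdef
      have hs1 : s ≠ 1 := by
        intro e
        rw [e, one_mul] at hst
        exact h1 (hst ▸ htT)
      have ht1 : t ≠ 1 := by
        intro e
        rw [e, mul_one] at hst
        exact h1 (hst ▸ hsT)
      have hfp : f (x, y) =
          (if x * s ∈ A then (x * s, y) else (x, x * s)) := by
        show (if x⁻¹ * y ∈ T then (x, y) else _) = _
        rw [if_neg h1, dif_pos h2]
      have hmy : (x * s)⁻¹ * y = t := by
        rw [mul_inv_rev, mul_assoc, ← hst, inv_mul_cancel_left]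
      by_cases hm : x * s ∈ A
      · rw [hfp, if_pos hm, mem_Dset]
        dsimp only
        refine ⟨show _ ∧ _ from ⟨?_, ?_⟩, hm, hyA⟩
        · intro e
          apply ht1
          rw [← hmy, e, inv_mul_cancel]
        · rcases hmemT.1 htT with h | h
          · exact Or.inl (hmy ▸ h)
          · refine Or.inr ?_
            have heq : y⁻¹ * (x * s) = t⁻¹ := by rw [← hmy]; group
            exact heq ▸ h
      · rw [hfp, if_neg hm, mem_Dset]
        dsimp only
        refine ⟨show _ ∧ _ from ⟨?_, ?_⟩, hxA, hm⟩
        · intro e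
          apply hs1
          have := congrArg (x⁻¹ * ·) e
          simpa using this.symm
        · rcases hmemT.1 hsT with h | h
          · exact Or.inl (by simpa using h)
          · exact Or.inr (by simpa [mul_inv_rev, mul_assoc] using h)
  have hfiber : ∀ q ∈ Dset (cayley Q (S : Set Q)) A,
      ((Dset (cayley Q Sbar) A).filter fun p => f p = q).card ≤ 4 * S.card - 1 := by
    rintro ⟨a, b⟩ hq
    rw [mem_Dset] at hq
    obtain ⟨hq1, haA, hbA⟩ := hq
    obtain ⟨hab, habS⟩ : a ≠ b ∧ (a⁻¹ * b ∈ (S : Set Q) ∨ b⁻¹ * a ∈ (S : Set Q)) := hq1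
    have huT : (a⁻¹ * b)⁻¹ ∈ T := by
      rcases habS with h | h
      · exact hTinv (hmemT.2 (Or.inl h))
      · exact hmemT.2 (Or.inl (by simpa [mul_inv_rev] using h))
    have hsubset : ((Dset (cayley Q Sbar) A).filter fun p => f p = (a, b)) ⊆
        insert (a, b) (((T.erase (a⁻¹ * b)⁻¹).image fun s => (a * s⁻¹, b)) ∪
          ((T.erase (a⁻¹ * b)⁻¹).image fun t => (a, b * t))) := by
      rintro ⟨x, y⟩ hp
      rw [Finset.mem_filter, mem_Dset] at hp
      obtain ⟨⟨hadj, hxA, hyA⟩, hfp⟩ := hp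
      obtain ⟨hne, hg⟩ := hadjY hadj
      by_cases h1 : x⁻¹ * y ∈ T
      · have : f (x, y) = (x, y) := if_pos h1
        rw [this] at hfp
        rw [hfp]
        exact Finset.mem_insert_self _ _
      · have h2 : ∃ s ∈ T, ∃ t ∈ T, s * t = x⁻¹ * y := by
          rcases hmemSbar.1 hg with h | h
          · exact absurd h h1
          · exact h
        obtain ⟨hsT, t, htT, hst⟩ := h2.choose_spec
        set s := h2.choose with hsdef
        have hfp' : f (x, y) =
            (if x * s ∈ A then (x * s, y) else (x, x * s)) := by
          show (if x⁻¹ * y ∈ T then (x, y) else _) = _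
          rw [if_neg h1, dif_pos h2]
        rw [hfp'] at hfp
        by_cases hm : x * s ∈ A
        · rw [if_pos hm] at hfp
          obtain ⟨hxs0, hyb0⟩ := Prod.ext_iff.1 hfp
          have hxs : x * s = a := hxs0
          have hyb : y = b := hyb0
          have hx : x = a * s⁻¹ := by rw [← hxs]; group
          have hsne : s ≠ (a⁻¹ * b)⁻¹ := by
            intro e
            apply hbA
            have : x = b := by rw [hx, e]; group
            exact this ▸ hxA
          refine Finset.mem_insert.2 (Or.inr (Finset.mem_union_left _ ?_))
          exact Finset.mem_image.2 ⟨s, Finset.mem_erase.2 ⟨hsne, hsT⟩, by simp [hx, hyb]⟩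
        · rw [if_neg hm] at hfp
          obtain ⟨hxa0, hxsb0⟩ := Prod.ext_iff.1 hfp
          have hxa : x = a := hxa0
          have hxsb : x * s = b := hxsb0
          have hy : y = b * t := by rw [← hxsb, mul_assoc, hst]; group
          have htne : t ≠ (a⁻¹ * b)⁻¹ := by
            intro e
            apply hyA
            have : y = a := by rw [hy, e]; group
            exact this ▸ haA
          refine Finset.mem_insert.2 (Or.inr (Finset.mem_union_right _ ?_))
          exact Finset.mem_image.2 ⟨t, Finset.mem_erase.2 ⟨htne, htT⟩, by simp [hy, hxa]⟩
    have hcard := Finset.card_le_card hsubset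
    have h3 := Finset.card_insert_le (a, b)
      (((T.erase (a⁻¹ * b)⁻¹).image fun s => (a * s⁻¹, b)) ∪
        ((T.erase (a⁻¹ * b)⁻¹).image fun t => (a, b * t)))
    have h4 := Finset.card_union_le ((T.erase (a⁻¹ * b)⁻¹).image fun s => (a * s⁻¹, b))
      ((T.erase (a⁻¹ * b)⁻¹).image fun t => (a, b * t))
    have h5 := Finset.card_image_le (s := T.erase (a⁻¹ * b)⁻¹) (f := fun s => (a * s⁻¹, b))
    have h6 := Finset.card_image_le (s := T.erase (a⁻¹ * b)⁻¹) (f := fun t => (a, b * t))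
    have h7 : (T.erase (a⁻¹ * b)⁻¹).card = T.card - 1 := Finset.card_erase_of_mem huT
    have h8 : 1 ≤ T.card := Finset.card_pos.2 ⟨_, huT⟩
    have h9 : 1 ≤ S.card := Finset.card_pos.2 hS
    omega
  exact Finset.card_le_mul_card_image_of_maps_to hmaps _ hfiber

lemma edgeBd_mono {V : Type*} [Fintype V] {G H : SimpleGraph V} (h : G ≤ H) (A : Finset V) :
    edgeBd G A ⊆ edgeBd H A := by
  intro e he
  rw [mem_edgeBd] at he ⊢
  exact ⟨SimpleGraph.edgeSet_mono h he.1, he.2⟩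

lemma chSet_nonneg {V : Type*} [Fintype V] (G : SimpleGraph V) :
    ∀ r ∈ chSet G, (0 : ℝ) ≤ r := by
  rintro r ⟨A, hA1, hA2, rfl⟩
  apply div_nonneg (by positivity)
  have h1 : (0 : ℝ) ≤ A.card := by positivity
  have h2 : (A.card : ℝ) ≤ Fintype.card V := by exact_mod_cast Finset.card_le_univ A
  exact le_min h1 (by linarith)

lemma chSet_bddBelow {V : Type*} [Fintype V] (G : SimpleGraph V) : BddBelow (chSet G) :=
  ⟨0, fun r hr => chSet_nonneg G r hr⟩

lemma min_pos {V : Type*} [Fintype V] {A : Finset V} (hA1 : A.Nonempty) (hA2 : A ≠ Finset.univ) :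
    (0 : ℝ) < min (A.card : ℝ) ((Fintype.card V : ℝ) - A.card) := by
  have h1 : (1 : ℝ) ≤ A.card := by exact_mod_cast Finset.one_le_card.2 hA1
  have h2 : (A.card : ℝ) < Fintype.card V := by
    exact_mod_cast (Finset.card_lt_iff_ne_univ A).2 hA2
  exact lt_min (by linarith) (by linarith)

/-- let `Q` be a finite quotient of a group generated by `S`, and let
`S̄ = S^(2)` be the set of all words of length at most 2 in `S ∪ S⁻¹` (i.e.
`(S ∪ S⁻¹) ∪ (S ∪ S⁻¹)·(S ∪ S⁻¹)`).  If `X`, `X̄` are the Cayley graphs of `Q` with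
respect to `S`, `S̄`, then `h(X) ≤ h(X̄) ≤ (4|S| − 1)·h(X)`. -/
theorem cheeger_square_generators {Q : Type*} [Group Q] [Fintype Q]
    (S : Finset Q) (hgen : Subgroup.closure (S : Set Q) = ⊤)
    (Sbar : Set Q)
    (hSbar : Sbar = ((S : Set Q) ∪ (S : Set Q)⁻¹) ∪
      ((S : Set Q) ∪ (S : Set Q)⁻¹) * ((S : Set Q) ∪ (S : Set Q)⁻¹)) :
    cheeger (cayley Q (S : Set Q)) ≤ cheeger (cayley Q Sbar) ∧
      cheeger (cayley Q Sbar) ≤ (4 * (S.card : ℝ) - 1) * cheeger (cayley Q (S : Set Q)) := by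
  classical
  by_cases hcard : Fintype.card Q ≤ 1
  · -- trivial group : both Cheeger constants are `sInf ∅ = 0`
    have h0 : ∀ G : SimpleGraph Q, cheeger G = 0 := by
      intro G
      rw [cheeger_eq]
      have : chSet G = ∅ := by
        rw [Set.eq_empty_iff_forall_notMem]
        rintro r ⟨A, hA1, hA2, -⟩
        apply hA2
        apply Finset.eq_univ_of_card
        have h1 : 1 ≤ A.card := Finset.one_le_card.2 hA1
        have h2 : A.card ≤ Fintype.card Q := Finset.card_le_univ A
        omega
      rw [this, Real.sInf_empty]
    rw [h0, h0]
    exact ⟨le_refl 0, by simp⟩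
  · push_neg at hcard
    have hSne : S.Nonempty := by
      rcases S.eq_empty_or_nonempty with rfl | h
      · exfalso
        rw [Finset.coe_empty, Subgroup.closure_empty] at hgen
        have hall : ∀ x : Q, x = 1 := by
          intro x
          have hx : x ∈ (⊥ : Subgroup Q) := by rw [hgen]; exact Subgroup.mem_top x
          exact Subgroup.mem_bot.1 hx
        have : Fintype.card Q ≤ 1 :=
          Fintype.card_le_one_iff.2 fun a b => (hall a).trans (hall b).symm
        omega
      · exact h
    have hQne : Nonempty Q := Fintype.card_pos_iff.1 (by omega)
    -- nonemptiness of the index sets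
    have hne : ∀ G : SimpleGraph Q, (chSet G).Nonempty := by
      intro G
      obtain ⟨a⟩ := hQne
      have hA2 : ({a} : Finset Q) ≠ Finset.univ := by
        intro h
        have := Finset.card_univ (α := Q)
        rw [← h] at this
        simp at this
        omega
      exact ⟨_, ⟨{a}, Finset.singleton_nonempty a, hA2, rfl⟩⟩
    have hle : cayley Q (S : Set Q) ≤ cayley Q Sbar := by
      intro x y h
      change x ≠ y ∧ (x⁻¹ * y ∈ (S : Set Q) ∨ y⁻¹ * x ∈ (S : Set Q)) at h
      show x ≠ y ∧ (x⁻¹ * y ∈ Sbar ∨ y⁻¹ * x ∈ Sbar)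
      refine ⟨h.1, ?_⟩
      have hsub : (S : Set Q) ⊆ Sbar := by
        rw [hSbar]
        intro z hz
        exact Or.inl (Or.inl hz)
      exact h.2.imp (fun hh => hsub hh) (fun hh => hsub hh)
    constructor
    · -- first inequality
      rw [cheeger_eq, cheeger_eq]
      apply le_csInf (hne _)
      rintro r ⟨A, hA1, hA2, rfl⟩
      have hmem : ((edgeBd (cayley Q (S : Set Q)) A).card : ℝ) /
          min (A.card : ℝ) ((Fintype.card Q : ℝ) - A.card) ∈ chSet (cayley Q (S : Set Q)) :=
        ⟨A, hA1, hA2, rfl⟩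
      refine le_trans (csInf_le (chSet_bddBelow _) hmem) ?_
      have hm := min_pos (V := Q) hA1 hA2
      rw [div_le_div_iff_of_pos_right hm]
      exact_mod_cast Finset.card_le_card (edgeBd_mono hle A)
    · -- second inequality
      have h9 : 1 ≤ S.card := Finset.card_pos.2 hSne
      have hcR : ((4 * S.card - 1 : ℕ) : ℝ) = 4 * (S.card : ℝ) - 1 := by
        have h1 : 1 ≤ 4 * S.card := by omega
        push_cast [Nat.cast_sub h1]
        ring
      rw [← hcR]
      set c : ℝ := ((4 * S.card - 1 : ℕ) : ℝ) with hcdef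
      have hcpos : 0 < c := by
        rw [hcdef]
        exact_mod_cast Nat.pos_of_ne_zero (by omega)
      have hkey : ∀ A : Finset Q, ((edgeBd (cayley Q Sbar) A).card : ℝ) ≤
          c * (edgeBd (cayley Q (S : Set Q)) A).card := by
        intro A
        rw [edgeBd_card_eq, edgeBd_card_eq, hcdef]
        exact_mod_cast key_count S hSne Sbar hSbar A
      have hmain : cheeger (cayley Q Sbar) / c ≤ cheeger (cayley Q (S : Set Q)) := by
        rw [cheeger_eq (cayley Q (S : Set Q))]
        apply le_csInf (hne _)
        rintro r ⟨A, hA1, hA2, rfl⟩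
        rw [div_le_iff₀ hcpos]
        have hmem : ((edgeBd (cayley Q Sbar) A).card : ℝ) /
            min (A.card : ℝ) ((Fintype.card Q : ℝ) - A.card) ∈ chSet (cayley Q Sbar) :=
          ⟨A, hA1, hA2, rfl⟩
        refine le_trans (csInf_le (chSet_bddBelow _) hmem) ?_
        have hm := min_pos (V := Q) hA1 hA2
        calc ((edgeBd (cayley Q Sbar) A).card : ℝ) /
            min (A.card : ℝ) ((Fintype.card Q : ℝ) - A.card)
            ≤ (c * (edgeBd (cayley Q (S : Set Q)) A).card) /
              min (A.card : ℝ) ((Fintype.card Q : ℝ) - A.card) := by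
              rw [div_le_div_iff_of_pos_right hm]; exact hkey A
          _ = ((edgeBd (cayley Q (S : Set Q)) A).card : ℝ) /
              min (A.card : ℝ) ((Fintype.card Q : ℝ) - A.card) * c := by ring
      have := (div_le_iff₀ hcpos).1 hmain
      linarith
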